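/- For every n ∈ ℕ₊ and each sign choice ±, the MU_v(2)-module L^±(n,01) is simple: its only MU_v(2)-submodules are 0 and L^±(n,01). -/
import Mathlib


set_option synthInstance.maxHeartbeats 1000000
set_option maxHeartbeats 1000000

namespace MirabolicSL2

noncomputable section

/-- The base field `K = ℂ(v)`. -/
abbrev K : Type := RatFunc ℂ

/-- The variable `v ∈ ℂ(v)`. -/
def vv : K := RatFunc.X

/-- The quantum integer `[m] = (v^m - v^{-m})/(v - v⁻¹)`. -/
def qn (m : ℤ) : K := (vv ^ m - vv ^ (-m)) / (vv - vv⁻¹)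

/-- The five generators `e, f, k, k⁻¹, ℓ` of mirabolic quantum `sl₂`. -/
inductive G5 : Type | e | f | k | k' | l

open FreeAlgebra in
/-- The defining relations of mirabolic quantum `sl₂`. -/
inductive Rel : FreeAlgebra K G5 → FreeAlgebra K G5 → Prop
  | kk'  : Rel (ι K G5.k * ι K G5.k') 1
  | k'k  : Rel (ι K G5.k' * ι K G5.k) 1
  | kek' : Rel (ι K G5.k * ι K G5.e * ι K G5.k') ((vv ^ 2) • ι K G5.e)
  | kfk' : Rel (ι K G5.k * ι K G5.f * ι K G5.k') ((vv ^ (-2 : ℤ)) • ι K G5.f)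
  | effe : Rel (ι K G5.e * ι K G5.f - ι K G5.f * ι K G5.e)
      (((vv - vv⁻¹)⁻¹) • (ι K G5.k - ι K G5.k'))
  | ll   : Rel (ι K G5.l * ι K G5.l) (ι K G5.l)
  | kl   : Rel (ι K G5.k * ι K G5.l) (ι K G5.l * ι K G5.k)
  | lel  : Rel (ι K G5.l * ι K G5.e * ι K G5.l) (ι K G5.l * ι K G5.e)
  | lfl  : Rel (ι K G5.l * ι K G5.f * ι K G5.l) (ι K G5.f * ι K G5.l)
  | serreE : Rel ((vv + vv⁻¹) • (ι K G5.e * ι K G5.l * ι K G5.e))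
      (vv⁻¹ • (ι K G5.e * ι K G5.e * ι K G5.l) + vv • (ι K G5.l * (ι K G5.e * ι K G5.e)))
  | serreF : Rel ((vv + vv⁻¹) • (ι K G5.f * ι K G5.l * ι K G5.f))
      (vv⁻¹ • (ι K G5.l * (ι K G5.f * ι K G5.f)) + vv • (ι K G5.f * ι K G5.f * ι K G5.l))

/-- Mirabolic quantum `sl₂`: the unital `K`-algebra presented by the generators
`e, f, k, k⁻¹, ℓ` and the relations `Rel`. -/
abbrev MU2 : Type := RingQuot Rel

/-- The generator `e` of `MU_v(2)`. -/
def Ee : MU2 := RingQuot.mkAlgHom K Rel (FreeAlgebra.ι K G5.e)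
/-- The generator `f` of `MU_v(2)`. -/
def Ff : MU2 := RingQuot.mkAlgHom K Rel (FreeAlgebra.ι K G5.f)
/-- The generator `k` of `MU_v(2)`. -/
def Kk : MU2 := RingQuot.mkAlgHom K Rel (FreeAlgebra.ι K G5.k)
/-- The generator `k⁻¹` of `MU_v(2)`. -/
def Kk' : MU2 := RingQuot.mkAlgHom K Rel (FreeAlgebra.ι K G5.k')
/-- The generator `ℓ` of `MU_v(2)`. -/
def Ll : MU2 := RingQuot.mkAlgHom K Rel (FreeAlgebra.ι K G5.l)

/-- The sign `±1`. -/
def sgn (pos : Bool) : K := if pos then 1 else -1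

/-- The index type for the basis of `L^±(n,01)`: `Sum.inl i` is the basis vector
`m_{i,0}` (`0 ≤ i ≤ n-1`) and `Sum.inr j` is the basis vector `m_{j+1,1}`
(so that the second index ranges over `1 ≤ j+1 ≤ n`). -/
abbrev I01 (n : ℕ) : Type := Fin n ⊕ Fin n

/-- The matrix of the action of `k` on `L^±(n,01)`: `k·m_{i,ε} = ±v^{n-2i} m_{i,ε}`. -/
def kMat01 (pos : Bool) (n : ℕ) : Matrix (I01 n) (I01 n) K := fun b b' =>
  if b = b' then
    (match b with
      | Sum.inl i => sgn pos * vv ^ ((n : ℤ) - 2 * ((i : ℕ) : ℤ))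
      | Sum.inr j => sgn pos * vv ^ ((n : ℤ) - 2 * (((j : ℕ) : ℤ) + 1)))
  else 0

/-- The matrix of the action of `ℓ` on `L^±(n,01)`: `ℓ·m_{i,ε} = ε m_{i,ε}`. -/
def lMat01 (n : ℕ) : Matrix (I01 n) (I01 n) K := fun b b' =>
  if b = b' then (match b with | Sum.inl _ => 0 | Sum.inr _ => 1) else 0

/-- The matrix of the action of `f` on `L^±(n,01)`:
`f·m_{i,0} = m_{i+1,0} + (v^i/[i+1]) m_{i+1,1}`, `f·m_{i,1} = v⁻¹([i]/[i+1]) m_{i+1,1}`. -/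
def fMat01 (n : ℕ) : Matrix (I01 n) (I01 n) K := fun b b' =>
  match b, b' with
  | Sum.inl i, Sum.inl i' => if (i : ℕ) = (i' : ℕ) + 1 then 1 else 0
  | Sum.inr j, Sum.inl i' =>
      if (j : ℕ) = (i' : ℕ) then vv ^ ((i' : ℕ) : ℤ) / qn ((i' : ℕ) + 1) else 0
  | Sum.inr j, Sum.inr j' =>
      if (j : ℕ) = (j' : ℕ) + 1 then vv⁻¹ * qn ((j' : ℕ) + 1) / qn ((j' : ℕ) + 2) else 0
  | Sum.inl _, Sum.inr _ => 0

/-- The matrix of the action of `e` on `L^±(n,01)`: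
`e·m_{i,0} = ±v[i][n-i] m_{i-1,0}`,
`e·m_{i,1} = ±[i][n+1-i] m_{i-1,1} ± v^{i-n}[i] m_{i-1,0}`. -/
def eMat01 (pos : Bool) (n : ℕ) : Matrix (I01 n) (I01 n) K := fun b b' =>
  match b, b' with
  | Sum.inl i, Sum.inl i' =>
      if (i : ℕ) + 1 = (i' : ℕ) then
        sgn pos * vv * qn ((i' : ℕ)) * qn ((n : ℤ) - ((i' : ℕ) : ℤ)) else 0
  | Sum.inl i, Sum.inr j' =>
      if (i : ℕ) = (j' : ℕ) then
        sgn pos * vv ^ ((((j' : ℕ) : ℤ) + 1) - (n : ℤ)) * qn (((j' : ℕ) : ℤ) + 1) else 0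
  | Sum.inr j, Sum.inr j' =>
      if (j : ℕ) + 1 = (j' : ℕ) then
        sgn pos * qn (((j' : ℕ) : ℤ) + 1) * qn ((n : ℤ) - ((j' : ℕ) : ℤ)) else 0
  | Sum.inr _, Sum.inl _ => 0

/-- `ρ` is the representation of `MU_v(2)` on `L^±(n,01)` given by the formulas of
Proposition 5.3. -/
def IsL01Rep (pos : Bool) (n : ℕ)
    (ρ : MU2 →ₐ[K] Module.End K (I01 n → K)) : Prop :=
  ρ Ee = Matrix.toLin' (eMat01 pos n) ∧
  ρ Ff = Matrix.toLin' (fMat01 n) ∧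
  ρ Kk = Matrix.toLin' (kMat01 pos n) ∧
  ρ Ll = Matrix.toLin' (lMat01 n)


open Sum Matrix

section Aux

lemma vv_ne : vv ≠ 0 := RatFunc.X_ne_zero

lemma vpow_ne_one (k : ℕ) (hk : k ≠ 0) : vv ^ k ≠ 1 := by
  intro h
  have h2 : (algebraMap (Polynomial ℂ) K) (Polynomial.X ^ k) = algebraMap (Polynomial ℂ) K 1 := by
    simpa [vv, map_pow] using h
  have h3 := RatFunc.algebraMap_injective ℂ h2
  have := congrArg Polynomial.natDegree h3
  simp [Polynomial.natDegree_X_pow] at this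
  exact hk this

lemma vzpow_ne_one (m : ℤ) (hm : m ≠ 0) : vv ^ m ≠ 1 := by
  rcases lt_or_gt_of_ne hm with h | h
  · intro he
    have h0 : vv ^ (-m) = 1 := by rw [_root_.zpow_neg, he, inv_one]
    refine vpow_ne_one (-m).toNat (by omega) ?_
    rw [show -m = (((-m).toNat : ℕ) : ℤ) by omega] at h0
    rwa [zpow_natCast] at h0
  · intro he
    refine vpow_ne_one m.toNat (by omega) ?_
    rw [show m = ((m.toNat : ℕ) : ℤ) by omega] at he
    rwa [zpow_natCast] at he

lemma denom_ne : vv - vv⁻¹ ≠ 0 := by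
  intro h
  have hv : vv = vv⁻¹ := by linear_combination h
  have h2 : vv ^ (2:ℤ) = 1 := by
    rw [show (2:ℤ) = 1+1 by norm_num, zpow_add₀ vv_ne, zpow_one]
    nth_rewrite 2 [hv]
    exact mul_inv_cancel₀ vv_ne
  exact vzpow_ne_one 2 (by norm_num) h2

lemma qn_ne (m : ℤ) (hm : 1 ≤ m) : qn m ≠ 0 := by
  unfold qn
  apply div_ne_zero _ denom_ne
  intro h
  have h1 : vv ^ m = vv ^ (-m) := by linear_combination h
  have h2 : vv ^ (2*m) = 1 := by
    calc vv ^ (2*m) = vv ^ m * vv ^ m := by rw [two_mul, zpow_add₀ vv_ne]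
    _ = vv ^ m * vv ^ (-m) := by nth_rewrite 2 [h1]; rfl
    _ = 1 := by rw [← zpow_add₀ vv_ne]; simp
  exact vzpow_ne_one _ (by omega) h2

lemma qn_one : qn 1 = 1 := by
  unfold qn
  rw [zpow_one, _root_.zpow_neg, zpow_one, div_self denom_ne]

lemma sgn_ne (pos : Bool) : sgn pos ≠ 0 := by cases pos <;> simp [sgn]

lemma fin_sum_ite {n : ℕ} (c : ℕ) (g : Fin n → K) :
    (∑ j : Fin n, if c = (j:ℕ) then g j else 0) = if h : c < n then g ⟨c,h⟩ else 0 := by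
  split
  next h =>
    rw [Finset.sum_eq_single (⟨c,h⟩ : Fin n)]
    · simp
    · intro b _ hb; rw [if_neg]; intro hc; exact hb (Fin.ext hc.symm)
    · simp
  next h =>
    apply Finset.sum_eq_zero; intro b _; rw [if_neg]; intro hc; exact h (hc ▸ b.isLt)

lemma fin_sum_ite_succ {n : ℕ} (c : ℕ) (g : Fin n → K) :
    (∑ j : Fin n, if c = (j:ℕ)+1 then g j else 0) =
    if h : 0 < c ∧ c-1 < n then g ⟨c-1, h.2⟩ else 0 := by
  split
  next h =>
    rw [Finset.sum_eq_single (⟨c-1,h.2⟩ : Fin n)]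
    · rw [if_pos (show c = ((⟨c-1, h.2⟩ : Fin n) : ℕ) + 1 by simp only [Fin.val_mk]; omega)]
    · intro b _ hb; rw [if_neg]; intro hc; apply hb; apply Fin.ext; simp only; omega
    · simp
  next h =>
    apply Finset.sum_eq_zero; intro b _; rw [if_neg]; intro hc
    apply h; have := b.isLt; omega

lemma coordE_inr (pos : Bool) (n : ℕ) (x : I01 n → K) (j : Fin n) :
    Matrix.toLin' (eMat01 pos n) x (Sum.inr j) =
    if h : (j:ℕ)+1 < n then
      sgn pos * qn (((j:ℕ):ℤ)+2) * qn ((n:ℤ) - (((j:ℕ):ℤ)+1)) * x (Sum.inr ⟨(j:ℕ)+1, h⟩)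
    else 0 := by
  simp only [Matrix.toLin'_apply, Matrix.mulVec, dotProduct, Fintype.sum_sum_type,
    eMat01, ite_mul, zero_mul]
  rw [Finset.sum_const_zero, zero_add, fin_sum_ite]
  split
  next h => push_cast; ring_nf
  next h => rfl

lemma coordE_inl (pos : Bool) (n : ℕ) (x : I01 n → K) (i : Fin n) :
    Matrix.toLin' (eMat01 pos n) x (Sum.inl i) =
    (if h : (i:ℕ)+1 < n then
      sgn pos * vv * qn (((i:ℕ):ℤ)+1) * qn ((n:ℤ) - (((i:ℕ):ℤ)+1)) * x (Sum.inl ⟨(i:ℕ)+1, h⟩)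
    else 0) + sgn pos * vv ^ ((((i:ℕ):ℤ)+1) - (n:ℤ)) * qn (((i:ℕ):ℤ)+1) * x (Sum.inr i) := by
  simp only [Matrix.toLin'_apply, Matrix.mulVec, dotProduct, Fintype.sum_sum_type,
    eMat01, ite_mul, zero_mul]
  rw [fin_sum_ite, fin_sum_ite, dif_pos i.isLt, Fin.eta]
  by_cases h : (i:ℕ)+1 < n
  · rw [dif_pos h, dif_pos h]
    push_cast
    ring_nf
  · rw [dif_neg h, dif_neg h]

lemma coordF_inl (n : ℕ) (x : I01 n → K) (i : Fin n) :
    Matrix.toLin' (fMat01 n) x (Sum.inl i) =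
    if _ : 0 < (i:ℕ) then x (Sum.inl ⟨(i:ℕ)-1, lt_of_le_of_lt (Nat.sub_le _ _) i.isLt⟩)
    else 0 := by
  simp only [Matrix.toLin'_apply, Matrix.mulVec, dotProduct, Fintype.sum_sum_type,
    fMat01, ite_mul, zero_mul, one_mul]
  rw [Finset.sum_const_zero, add_zero, fin_sum_ite_succ]
  by_cases h : 0 < (i:ℕ)
  · rw [dif_pos ⟨h, lt_of_le_of_lt (Nat.sub_le _ _) i.isLt⟩, dif_pos h]
  · rw [dif_neg (by omega), dif_neg h]

lemma coordF_inr (n : ℕ) (x : I01 n → K) (j : Fin n) :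
    Matrix.toLin' (fMat01 n) x (Sum.inr j) =
    vv ^ ((j:ℕ):ℤ) / qn ((j:ℕ)+1) * x (Sum.inl j) +
    (if _ : 0 < (j:ℕ) then
      vv⁻¹ * qn ((((j:ℕ)-1 : ℕ):ℤ)+1) / qn ((((j:ℕ)-1 : ℕ):ℤ)+2) *
        x (Sum.inr ⟨(j:ℕ)-1, lt_of_le_of_lt (Nat.sub_le _ _) j.isLt⟩)
    else 0) := by
  simp only [Matrix.toLin'_apply, Matrix.mulVec, dotProduct, Fintype.sum_sum_type,
    fMat01, ite_mul, zero_mul]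
  rw [fin_sum_ite, fin_sum_ite_succ, dif_pos j.isLt, Fin.eta]
  by_cases h : 0 < (j:ℕ)
  · rw [dif_pos ⟨h, lt_of_le_of_lt (Nat.sub_le _ _) j.isLt⟩, dif_pos h]
  · rw [dif_neg (by omega), dif_neg h]

lemma coordL_inl (n : ℕ) (x : I01 n → K) (i : Fin n) :
    Matrix.toLin' (lMat01 n) x (Sum.inl i) = 0 := by
  simp [Matrix.toLin'_apply, Matrix.mulVec, dotProduct, lMat01]

lemma coordL_inr (n : ℕ) (x : I01 n → K) (j : Fin n) :
    Matrix.toLin' (lMat01 n) x (Sum.inr j) = x (Sum.inr j) := by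
  simp [Matrix.toLin'_apply, Matrix.mulVec, dotProduct, lMat01, ite_mul,
    Fintype.sum_sum_type]

end Aux

section Main

/-- standard basis vector -/
def sing {n : ℕ} (b : I01 n) : I01 n → K := Pi.single b 1

lemma sing_apply {n : ℕ} (b b' : I01 n) : sing b b' = if b' = b then 1 else 0 :=
  Pi.single_apply b 1 b'

lemma sing_rr {n : ℕ} (a b : Fin n) :
    sing (Sum.inr a) (Sum.inr b) = if (b:ℕ) = (a:ℕ) then 1 else 0 := by
  rw [sing_apply]
  by_cases h : (b:ℕ) = (a:ℕ)
  · rw [if_pos (congrArg Sum.inr (Fin.ext h)), if_pos h]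
  · rw [if_neg (fun hc => h (congrArg Fin.val (Sum.inr_injective hc))), if_neg h]

lemma sing_ll {n : ℕ} (a b : Fin n) :
    sing (Sum.inl a) (Sum.inl b) = if (b:ℕ) = (a:ℕ) then 1 else 0 := by
  rw [sing_apply]
  by_cases h : (b:ℕ) = (a:ℕ)
  · rw [if_pos (congrArg Sum.inl (Fin.ext h)), if_pos h]
  · rw [if_neg (fun hc => h (congrArg Fin.val (Sum.inl_injective hc))), if_neg h]

lemma sing_rl {n : ℕ} (a b : Fin n) : sing (Sum.inr a) (Sum.inl b) = 0 := by
  rw [sing_apply, if_neg (by simp)]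

lemma sing_lr {n : ℕ} (a b : Fin n) : sing (Sum.inl a) (Sum.inr b) = 0 := by
  rw [sing_apply, if_neg (by simp)]

variable {pos : Bool} {n : ℕ} (hn : 0 < n) (W : Submodule K (I01 n → K))
variable (hE : ∀ x ∈ W, Matrix.toLin' (eMat01 pos n) x ∈ W)
variable (hF : ∀ x ∈ W, Matrix.toLin' (fMat01 n) x ∈ W)
variable (hL : ∀ x ∈ W, Matrix.toLin' (lMat01 n) x ∈ W)

lemma top_of_singles (h : ∀ b : I01 n, sing b ∈ W) : W = ⊤ := by
  rw [eq_top_iff]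
  rintro x -
  have hx : x = ∑ b, x b • sing b := by
    funext b'
    simp [sing_apply, Finset.sum_apply, mul_ite]
  rw [hx]
  exact Submodule.sum_mem _ fun b _ => W.smul_mem _ (h b)

include hn hF in
lemma singles_inr (h0 : sing (Sum.inr (⟨0,hn⟩ : Fin n)) ∈ W) :
    ∀ m, (hm : m < n) → sing (Sum.inr (⟨m,hm⟩ : Fin n)) ∈ W := by
  intro m
  induction m with
  | zero => intro hm; exact h0
  | succ m ih =>
    intro hm
    have hm' : m < n := by omega
    have hy := hF _ (ih hm')
    set c : K := vv⁻¹ * qn ((m:ℤ)+1) / qn ((m:ℤ)+2) with hc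
    have hcne : c ≠ 0 := by
      apply div_ne_zero
      · exact mul_ne_zero (inv_ne_zero vv_ne) (qn_ne _ (by omega))
      · exact qn_ne _ (by omega)
    have claim : Matrix.toLin' (fMat01 n) (sing (Sum.inr (⟨m,hm'⟩:Fin n))) =
        c • sing (Sum.inr (⟨m+1,hm⟩ : Fin n)) := by
      funext b
      cases b with
      | inl i =>
        rw [coordF_inl]
        simp only [Pi.smul_apply, sing_rl, smul_zero]
        split <;> rfl
      | inr j =>
        rw [coordF_inr]
        simp only [Pi.smul_apply, sing_rl, sing_rr, mul_zero, zero_add, smul_eq_mul,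
          Fin.val_mk]
        by_cases hj : (j:ℕ) = m+1
        · rw [if_pos hj, dif_pos (show 0 < (j:ℕ) by omega),
            if_pos (show (j:ℕ)-1 = m by omega), show (j:ℕ)-1 = m by omega]
        · rw [if_neg hj, mul_zero]
          split
          next h => rw [if_neg (by omega), mul_zero]
          next h => rfl
    have final : sing (Sum.inr (⟨m+1,hm⟩ : Fin n)) =
        c⁻¹ • Matrix.toLin' (fMat01 n) (sing (Sum.inr (⟨m,hm'⟩:Fin n))) := by
      rw [claim, smul_smul, inv_mul_cancel₀ hcne, one_smul]
    rw [final]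
    exact W.smul_mem _ hy

include hE hL in
lemma singles_inl (hall : ∀ m, (hm : m < n) → sing (Sum.inr (⟨m,hm⟩ : Fin n)) ∈ W) :
    ∀ i : Fin n, sing (Sum.inl i) ∈ W := by
  intro i
  have hx := hall i.val i.isLt
  have hEx := hE _ hx
  have huW : Matrix.toLin' (eMat01 pos n) (sing (Sum.inr (⟨i.val, i.isLt⟩:Fin n))) -
      Matrix.toLin' (lMat01 n)
        (Matrix.toLin' (eMat01 pos n) (sing (Sum.inr (⟨i.val, i.isLt⟩:Fin n)))) ∈ W :=
    Submodule.sub_mem _ hEx (hL _ hEx)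
  set B : K := sgn pos * vv ^ ((((i:ℕ):ℤ)+1) - (n:ℤ)) * qn (((i:ℕ):ℤ)+1) with hB
  have hBne : B ≠ 0 :=
    mul_ne_zero (mul_ne_zero (sgn_ne pos) (zpow_ne_zero _ vv_ne)) (qn_ne _ (by omega))
  have claim : Matrix.toLin' (eMat01 pos n) (sing (Sum.inr (⟨i.val, i.isLt⟩:Fin n))) -
      Matrix.toLin' (lMat01 n)
        (Matrix.toLin' (eMat01 pos n) (sing (Sum.inr (⟨i.val, i.isLt⟩:Fin n)))) =
      B • sing (Sum.inl i) := by
    funext b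
    cases b with
    | inl i' =>
      rw [Pi.sub_apply, coordL_inl, sub_zero, coordE_inl, Pi.smul_apply, sing_ll]
      have h2 : sing (Sum.inr (⟨i.val, i.isLt⟩:Fin n)) (Sum.inr i') =
          if (i':ℕ) = (i:ℕ) then 1 else 0 := by
        rw [sing_rr]
      rw [h2]
      by_cases hii : (i':ℕ) = (i:ℕ)
      · rw [if_pos hii, mul_one, smul_eq_mul, mul_one]
        have hz : (if h : (i':ℕ)+1 < n then
            sgn pos * vv * qn (((i':ℕ):ℤ)+1) * qn ((n:ℤ) - (((i':ℕ):ℤ)+1)) *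
              sing (Sum.inr (⟨i.val, i.isLt⟩:Fin n)) (Sum.inl ⟨(i':ℕ)+1, h⟩)
          else 0) = 0 := by
          split
          · rw [sing_rl, mul_zero]
          · rfl
        rw [hz, zero_add, hB, hii]
      · rw [if_neg hii, mul_zero, smul_zero]
        have hz : (if h : (i':ℕ)+1 < n then
            sgn pos * vv * qn (((i':ℕ):ℤ)+1) * qn ((n:ℤ) - (((i':ℕ):ℤ)+1)) *
              sing (Sum.inr (⟨i.val, i.isLt⟩:Fin n)) (Sum.inl ⟨(i':ℕ)+1, h⟩)
          else 0) = 0 := by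
          split
          · rw [sing_rl, mul_zero]
          · rfl
        rw [hz, zero_add]
    | inr j =>
      rw [Pi.sub_apply, coordL_inr, sub_self, Pi.smul_apply, sing_lr, smul_zero]
  have final : sing (Sum.inl i) = B⁻¹ •
      (Matrix.toLin' (eMat01 pos n) (sing (Sum.inr (⟨i.val, i.isLt⟩:Fin n))) -
      Matrix.toLin' (lMat01 n)
        (Matrix.toLin' (eMat01 pos n) (sing (Sum.inr (⟨i.val, i.isLt⟩:Fin n))))) := by
    rw [claim, smul_smul, inv_mul_cancel₀ hBne, one_smul]
  rw [final]
  exact W.smul_mem _ huW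

include hn hE hL in
lemma descent_inr :
    ∀ m : ℕ, ∀ x, x ∈ W → (∀ i : Fin n, x (Sum.inl i) = 0) →
      (∀ j : Fin n, m ≤ (j:ℕ) → x (Sum.inr j) = 0) → x ≠ 0 →
      sing (Sum.inr (⟨0,hn⟩:Fin n)) ∈ W := by
  intro m
  induction m with
  | zero =>
    intro x _ h1 h2 hx
    exact absurd (funext fun b => by cases b with
      | inl i => exact h1 i
      | inr j => exact h2 j (Nat.zero_le _)) hx
  | succ m ih =>
    intro x hxW h1 h2 hx
    by_cases hc : ∀ j : Fin n, m ≤ (j:ℕ) → x (Sum.inr j) = 0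
    · exact ih x hxW h1 hc hx
    · push_neg at hc
      obtain ⟨j0, hj0le, hj0⟩ := hc
      have hj0m : (j0:ℕ) = m := by
        by_contra hne
        exact hj0 (h2 j0 (by omega))
      by_cases hm : m = 0
      · have key : sing (Sum.inr (⟨0,hn⟩:Fin n)) = (x (Sum.inr j0))⁻¹ • x := by
          funext b
          cases b with
          | inl i => rw [sing_rl, Pi.smul_apply, h1 i, smul_zero]
          | inr j =>
            rw [sing_rr, Pi.smul_apply, smul_eq_mul]
            by_cases hj : (j:ℕ) = 0
            · have hjj : j = j0 := Fin.ext (by omega)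
              rw [if_pos (by (try simp only [Fin.val_mk]); omega), hjj,
                inv_mul_cancel₀ hj0]
            · rw [if_neg (by (try simp only [Fin.val_mk]); omega),
                h2 j (by omega), mul_zero]
        rw [key]
        exact W.smul_mem _ hxW
      · have hml : m < n := by have := j0.isLt; omega
        set x' := Matrix.toLin' (lMat01 n) (Matrix.toLin' (eMat01 pos n) x) with hx'def
        have hx'W : x' ∈ W := hL _ (hE _ hxW)
        apply ih x' hx'W
        · intro i; exact coordL_inl n _ i
        · intro j hj
          rw [hx'def, coordL_inr, coordE_inr]
          split
          next h =>
            rw [h2 ⟨(j:ℕ)+1, h⟩ (by (try simp only [Fin.val_mk]); omega), mul_zero]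
          next h => rfl
        · intro h0
          have hme : x' (Sum.inr ⟨m-1, by omega⟩) = 0 := by rw [h0]; rfl
          rw [hx'def, coordL_inr, coordE_inr] at hme
          split at hme
          next hcond =>
            have hjj : (⟨((⟨m-1, by omega⟩ : Fin n) : ℕ)+1, hcond⟩ : Fin n) = j0 :=
              Fin.ext (by (try simp only [Fin.val_mk]); omega)
            rw [hjj] at hme
            rcases mul_eq_zero.mp hme with h' | h'
            · rcases mul_eq_zero.mp h' with h'' | h''
              · rcases mul_eq_zero.mp h'' with h3 | h3
                · exact sgn_ne pos h3
                · exact qn_ne _ (by omega) h3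
              · refine qn_ne _ ?_ h''
                have : ((⟨m-1, by omega⟩ : Fin n) : ℕ) = m-1 := rfl
                rw [this]
                have : (m:ℤ) - 1 + 1 ≤ (n:ℤ) - 1 := by omega
                push_cast
                omega
            · exact hj0 h'
          next hcond =>
            apply hcond
            (try simp only [Fin.val_mk]); omega
  
include hn hE in
lemma descent_inl :
    ∀ m : ℕ, ∀ x, x ∈ W → (∀ j : Fin n, x (Sum.inr j) = 0) →
      (∀ i : Fin n, m ≤ (i:ℕ) → x (Sum.inl i) = 0) → x ≠ 0 →
      sing (Sum.inl (⟨0,hn⟩:Fin n)) ∈ W := by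
  intro m
  induction m with
  | zero =>
    intro x _ h1 h2 hx
    exact absurd (funext fun b => by cases b with
      | inl i => exact h2 i (Nat.zero_le _)
      | inr j => exact h1 j) hx
  | succ m ih =>
    intro x hxW h1 h2 hx
    by_cases hc : ∀ i : Fin n, m ≤ (i:ℕ) → x (Sum.inl i) = 0
    · exact ih x hxW h1 hc hx
    · push_neg at hc
      obtain ⟨i0, hi0le, hi0⟩ := hc
      have hi0m : (i0:ℕ) = m := by
        by_contra hne
        exact hi0 (h2 i0 (by omega))
      by_cases hm : m = 0
      · have key : sing (Sum.inl (⟨0,hn⟩:Fin n)) = (x (Sum.inl i0))⁻¹ • x := by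
          funext b
          cases b with
          | inr j => rw [sing_lr, Pi.smul_apply, h1 j, smul_zero]
          | inl i =>
            rw [sing_ll, Pi.smul_apply, smul_eq_mul]
            by_cases hi : (i:ℕ) = 0
            · have hii : i = i0 := Fin.ext (by omega)
              rw [if_pos (by (try simp only [Fin.val_mk]); omega), hii,
                inv_mul_cancel₀ hi0]
            · rw [if_neg (by (try simp only [Fin.val_mk]); omega),
                h2 i (by omega), mul_zero]
        rw [key]
        exact W.smul_mem _ hxW
      · have hml : m < n := by have := i0.isLt; omega
        set x' := Matrix.toLin' (eMat01 pos n) x with hx'def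
        have hx'W : x' ∈ W := hE _ hxW
        apply ih x' hx'W
        · intro j
          rw [hx'def, coordE_inr]
          split
          next h =>
            rw [h1 ⟨(j:ℕ)+1, h⟩, mul_zero]
          next h => rfl
        · intro i hi
          rw [hx'def, coordE_inl, h1 i, mul_zero, add_zero]
          split
          next h =>
            rw [h2 ⟨(i:ℕ)+1, h⟩ (by (try simp only [Fin.val_mk]); omega), mul_zero]
          next h => rfl
        · intro h0
          have hme : x' (Sum.inl ⟨m-1, by omega⟩) = 0 := by rw [h0]; rfl
          rw [hx'def, coordE_inl, h1 _, mul_zero, add_zero] at hme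
          split at hme
          next hcond =>
            have hii : (⟨((⟨m-1, by omega⟩ : Fin n) : ℕ)+1, hcond⟩ : Fin n) = i0 :=
              Fin.ext (by (try simp only [Fin.val_mk]); omega)
            rw [hii] at hme
            rcases mul_eq_zero.mp hme with h' | h'
            · rcases mul_eq_zero.mp h' with h'' | h''
              · rcases mul_eq_zero.mp h'' with h3 | h3
                · rcases mul_eq_zero.mp h3 with h4 | h4
                  · exact sgn_ne pos h4
                  · exact vv_ne h4
                · exact qn_ne _ (by omega) h3
              · refine qn_ne _ ?_ h''
                have hval : ((⟨m-1, by omega⟩ : Fin n) : ℕ) = m-1 := rfl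
                rw [hval]
                push_cast
                omega
            · exact hi0 h'
          next hcond =>
            apply hcond
            (try simp only [Fin.val_mk]); omega

include hn hF hL in
lemma bridge (h0 : sing (Sum.inl (⟨0,hn⟩:Fin n)) ∈ W) :
    sing (Sum.inr (⟨0,hn⟩:Fin n)) ∈ W := by
  have hyW := hL _ (hF _ h0)
  have claim : Matrix.toLin' (lMat01 n)
      (Matrix.toLin' (fMat01 n) (sing (Sum.inl (⟨0,hn⟩:Fin n)))) =
      sing (Sum.inr (⟨0,hn⟩:Fin n)) := by
    funext b
    cases b with
    | inl i => rw [coordL_inl, sing_rl]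
    | inr j =>
      rw [coordL_inr, coordF_inr, sing_rr]
      by_cases hj : (j:ℕ) = 0
      · rw [if_pos (by (try simp only [Fin.val_mk]); omega), dif_neg (by omega),
          add_zero, sing_ll, if_pos (by (try simp only [Fin.val_mk]); omega), mul_one,
          hj]
        norm_num [qn_one]
      · rw [if_neg (by (try simp only [Fin.val_mk]); omega), sing_ll,
          if_neg (by (try simp only [Fin.val_mk]); omega), mul_zero, zero_add]
        split
        next h => rw [sing_lr, mul_zero]
        next h => rfl
  rw [← claim]
  exact hyW

end Main

/-- Proposition 5.4: `L^±(n,01)` is a simple `MU_v(2)`-module for all `n ≥ 1`: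
its only `MU_v(2)`-invariant subspaces are `0` and the whole space. -/
theorem L01_simple (pos : Bool) (n : ℕ) (hn : 1 ≤ n)
    (ρ : MU2 →ₐ[K] Module.End K (I01 n → K)) (hρ : IsL01Rep pos n ρ) :
    ∀ W : Submodule K (I01 n → K),
      (∀ (a : MU2), ∀ x ∈ W, ρ a x ∈ W) → W = ⊥ ∨ W = ⊤ := by
  intro W hW
  by_cases hbot : W = ⊥
  · exact Or.inl hbot
  right
  obtain ⟨hρE, hρF, hρK, hρL⟩ := hρ
  have hE : ∀ x ∈ W, Matrix.toLin' (eMat01 pos n) x ∈ W := fun x hx => by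
    have := hW Ee x hx; rwa [hρE] at this
  have hF : ∀ x ∈ W, Matrix.toLin' (fMat01 n) x ∈ W := fun x hx => by
    have := hW Ff x hx; rwa [hρF] at this
  have hL : ∀ x ∈ W, Matrix.toLin' (lMat01 n) x ∈ W := fun x hx => by
    have := hW Ll x hx; rwa [hρL] at this
  have hn' : 0 < n := hn
  obtain ⟨w, hwW, hw0⟩ := Submodule.exists_mem_ne_zero_of_ne_bot hbot
  have hr0 : sing (Sum.inr (⟨0,hn'⟩ : Fin n)) ∈ W := by
    by_cases h1 : Matrix.toLin' (lMat01 n) w = 0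
    · have hsup : ∀ j : Fin n, w (Sum.inr j) = 0 := fun j => by
        have := congrFun h1 (Sum.inr j)
        rwa [coordL_inr] at this
      have h00 : sing (Sum.inl (⟨0,hn'⟩:Fin n)) ∈ W :=
        descent_inl hn' W hE n w hwW hsup (fun i hi => absurd i.isLt (by omega)) hw0
      exact bridge hn' W hF hL h00
    · have hw1W : Matrix.toLin' (lMat01 n) w ∈ W := hL _ hwW
      apply descent_inr hn' W hE hL n _ hw1W
      · intro i; exact coordL_inl n _ i
      · intro j hj; exact absurd j.isLt (by omega)
      · exact h1
  refine top_of_singles W (fun b => ?_)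
  cases b with
  | inl i => exact singles_inl W hE hL (singles_inr hn' W hF hr0) i
  | inr j => exact singles_inr hn' W hF hr0 j.val j.isLt

end

end MirabolicSL2
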